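/- The integer g divides D, and the subgroup L₊ + L₋ := ℤ·(2p/g)·x + ℤ·e₁ + ℤ·e₂ has finite index exactly D/g in the lattice L. -/

import Mathlib

/-
In the coordinates `(a, b, c)` of `L`, and writing `μ = g u`, `2p = g t`, the three generators
are `(-t, u, tm)`, `(0, 1, -μ)` and `(-1, 0, -m)`. The form `c - ma + μb` kills the last two and
sends the first to `2tm + μu = -D/g`; conversely every element of `L` on which the form is
divisible by `D/g` is an integral combination of the generators. So the sublattice is the kernel
of the surjection `L → ℤ/(D/g)` given by the form, and its index is `D/g`.
-/

open Matrix

/-- The lattice `L` of matrices `[[b, -a/p], [c, -b]]` with `a, b, c ∈ ℤ`, as an additive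
subgroup of the `2 × 2` rational matrices. -/
def latticeL (p : ℕ) : AddSubgroup (Matrix (Fin 2) (Fin 2) ℚ) where
  carrier := {y | ∃ a b c : ℤ, y = !![(b : ℚ), -(a : ℚ) / p; (c : ℚ), -(b : ℚ)]}
  zero_mem' := ⟨0, 0, 0, by ext i j; fin_cases i <;> fin_cases j <;> norm_num⟩
  add_mem' := by
    rintro y z ⟨a₁, b₁, c₁, rfl⟩ ⟨a₂, b₂, c₂, rfl⟩
    refine ⟨a₁ + a₂, b₁ + b₂, c₁ + c₂, ?_⟩
    ext i j
    fin_cases i <;> fin_cases j <;>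
      simp [Matrix.add_apply] <;> push_cast <;> ring
  neg_mem' := by
    rintro y ⟨a, b, c, rfl⟩
    refine ⟨-a, -b, -c, ?_⟩
    ext i j
    fin_cases i <;> fin_cases j <;>
      simp [Matrix.neg_apply] <;> push_cast <;> ring

/-- The additive subgroup `ℤv₁ + ℤv₂ + ℤv₃` generated by three `2 × 2` rational matrices. -/
def zSpan₃ (v₁ v₂ v₃ : Matrix (Fin 2) (Fin 2) ℚ) :
    AddSubgroup (Matrix (Fin 2) (Fin 2) ℚ) where
  carrier := {y | ∃ k a b : ℤ, y = (k : ℚ) • v₁ + (a : ℚ) • v₂ + (b : ℚ) • v₃}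
  zero_mem' := ⟨0, 0, 0, by ext i j; fin_cases i <;> fin_cases j <;> norm_num⟩
  add_mem' := by
    rintro y z ⟨k₁, a₁, b₁, rfl⟩ ⟨k₂, a₂, b₂, rfl⟩
    exact ⟨k₁ + k₂, a₁ + a₂, b₁ + b₂, by push_cast; module⟩
  neg_mem' := by
    rintro y ⟨k, a, b, rfl⟩
    exact ⟨-k, -a, -b, by push_cast; module⟩

def latticeMat (p : ℕ) (a b c : ℤ) : Matrix (Fin 2) (Fin 2) ℚ :=
  !![(b : ℚ), -(a : ℚ) / p; (c : ℚ), -(b : ℚ)]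

section Lattice

variable {p : ℕ}

theorem latticeMat_mem_latticeL (a b c : ℤ) : latticeMat p a b c ∈ latticeL p :=
  ⟨a, b, c, rfl⟩

theorem latticeMat_add (a b c a' b' c' : ℤ) :
    latticeMat p a b c + latticeMat p a' b' c' = latticeMat p (a + a') (b + b') (c + c') := by
  ext i j
  fin_cases i <;> fin_cases j <;> simp [latticeMat, add_div] <;> ring

theorem intCast_smul_latticeMat (k a b c : ℤ) :
    (k : ℚ) • latticeMat p a b c = latticeMat p (k * a) (k * b) (k * c) := by
  ext i j
  fin_cases i <;> fin_cases j <;> simp [latticeMat, neg_div, mul_div_assoc']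

theorem latticeMat_inj (hp : p ≠ 0) {a b c a' b' c' : ℤ} :
    latticeMat p a b c = latticeMat p a' b' c' ↔ a = a' ∧ b = b' ∧ c = c' := by
  refine ⟨fun h ↦ ?_, by rintro ⟨rfl, rfl, rfl⟩; rfl⟩
  have h00 := congrFun₂ h 0 0
  have h01 := congrFun₂ h 0 1
  have h10 := congrFun₂ h 1 0
  simp only [latticeMat, of_apply, cons_val', cons_val_zero, cons_val_one, empty_val',
    cons_val_fin_one, Int.cast_inj] at h00 h01 h10
  rw [div_left_inj' (by exact_mod_cast hp), neg_inj, Int.cast_inj] at h01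
  exact ⟨h01, h00, h10⟩

theorem zSpan₃_le {H : AddSubgroup (Matrix (Fin 2) (Fin 2) ℚ)}
    {v₁ v₂ v₃ : Matrix (Fin 2) (Fin 2) ℚ} (h₁ : v₁ ∈ H) (h₂ : v₂ ∈ H) (h₃ : v₃ ∈ H) : zSpan₃ v₁ v₂ v₃ ≤ H := by
  rintro y ⟨k, a, b, rfl⟩
  simp only [Int.cast_smul_eq_zsmul]
  exact H.add_mem (H.add_mem (H.zsmul_mem h₁ k) (H.zsmul_mem h₂ a)) (H.zsmul_mem h₃ b)

theorem latticeMat_mem_zSpan₃_iff (hp : p ≠ 0) {a b c a₁ b₁ c₁ a₂ b₂ c₂ a₃ b₃ c₃ : ℤ} :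
    latticeMat p a b c ∈ zSpan₃ (latticeMat p a₁ b₁ c₁) (latticeMat p a₂ b₂ c₂)
        (latticeMat p a₃ b₃ c₃) ↔
      ∃ k α β : ℤ, a = k * a₁ + α * a₂ + β * a₃ ∧ b = k * b₁ + α * b₂ + β * b₃ ∧
        c = k * c₁ + α * c₂ + β * c₃ := by
  refine exists₃_congr fun k α β ↦ ?_
  simp only [intCast_smul_latticeMat, latticeMat_add, latticeMat_inj hp]

theorem latticeMat_mem_zSpan₃_iff_dvd (hp : p ≠ 0) {μ m t u d : ℤ} (hd : 2 * t * m + μ * u = -d)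
    (a b c : ℤ) :
    latticeMat p a b c ∈ zSpan₃ (latticeMat p (-t) u (t * m)) (latticeMat p 0 1 (-μ))
        (latticeMat p (-1) 0 (-m)) ↔ d ∣ c - m * a + μ * b := by
  rw [latticeMat_mem_zSpan₃_iff hp]
  constructor
  · rintro ⟨k, α, β, rfl, rfl, rfl⟩
    exact ⟨-k, by linear_combination k * hd⟩
  · rintro ⟨j, hj⟩
    exact ⟨-j, b + j * u, j * t - a, by ring, by ring, by linear_combination hj + j * hd⟩

def latticeForm (p : ℕ) (μ m : ℤ) (M : Matrix (Fin 2) (Fin 2) ℚ) : ℚ :=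
  M 1 0 + p * m * M 0 1 + μ * M 0 0

theorem latticeForm_latticeMat (hp : p ≠ 0) (μ m a b c : ℤ) :
    latticeForm p μ m (latticeMat p a b c) = ((c - m * a + μ * b : ℤ) : ℚ) := by
  simp only [latticeForm, latticeMat, of_apply, cons_val', cons_val_zero, cons_val_fin_one,
    cons_val_one, Int.cast_add, Int.cast_sub, Int.cast_mul]
  field_simp
  ring

theorem exists_latticeMat (y : latticeL p) :
    ∃ a b c : ℤ, y = ⟨latticeMat p a b c, latticeMat_mem_latticeL a b c⟩ := by
  obtain ⟨_, a, b, c, rfl⟩ := y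
  exact ⟨a, b, c, rfl⟩

def latticeResidue (hp : p ≠ 0) (μ m : ℤ) (n : ℕ) : latticeL p →+ ZMod n where
  toFun y := ((latticeForm p μ m y).num : ZMod n)
  map_zero' := by simp [latticeForm]
  map_add' y z := by
    obtain ⟨a, b, c, rfl⟩ := exists_latticeMat y
    obtain ⟨a', b', c', rfl⟩ := exists_latticeMat z
    simp only [AddMemClass.mk_add_mk, latticeMat_add, latticeForm_latticeMat hp, Rat.num_intCast]
    push_cast
    ring

theorem latticeResidue_apply (hp : p ≠ 0) (μ m : ℤ) (n : ℕ) (a b c : ℤ) :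
    latticeResidue hp μ m n ⟨latticeMat p a b c, latticeMat_mem_latticeL a b c⟩ =
      ((c - m * a + μ * b : ℤ) : ZMod n) := by
  rw [latticeResidue, AddMonoidHom.coe_mk, ZeroHom.coe_mk, latticeForm_latticeMat hp,
    Rat.num_intCast]

theorem latticeResidue_surjective (hp : p ≠ 0) (μ m : ℤ) (n : ℕ) :
    Function.Surjective (latticeResidue hp μ m n) := by
  intro z
  obtain ⟨j, rfl⟩ := ZMod.intCast_surjective z
  exact ⟨_, (latticeResidue_apply hp μ m n 0 0 j).trans (by simp)⟩

theorem relIndex_zSpan₃_latticeL (hp : p ≠ 0) {μ m t u d : ℤ}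
    (hd : 2 * t * m + μ * u = -d) :
    (zSpan₃ (latticeMat p (-t) u (t * m)) (latticeMat p 0 1 (-μ))
      (latticeMat p (-1) 0 (-m))).relIndex (latticeL p) = d.natAbs := by
  have hker : (zSpan₃ (latticeMat p (-t) u (t * m)) (latticeMat p 0 1 (-μ))
      (latticeMat p (-1) 0 (-m))).addSubgroupOf (latticeL p) =
        (latticeResidue hp μ m d.natAbs).ker := by
    ext y
    obtain ⟨a, b, c, rfl⟩ := exists_latticeMat y
    rw [AddSubgroup.mem_addSubgroupOf, AddMonoidHom.mem_ker, latticeResidue_apply,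
      latticeMat_mem_zSpan₃_iff_dvd hp hd, ZMod.intCast_zmod_eq_zero_iff_dvd,
      Int.natCast_natAbs, abs_dvd]
  rw [AddSubgroup.relIndex, hker, AddSubgroup.index_ker,
    AddMonoidHom.range_eq_top.mpr (latticeResidue_surjective hp μ m _), AddSubgroup.card_top,
    Nat.card_zmod]

theorem two_mul_div_smul_eq_latticeMat {g : ℕ} {μ m t u : ℤ} (hp : p ≠ 0) (hu : μ = g * u)
    (ht : 2 * (p : ℤ) = g * t) :
    (2 * (p : ℚ) / g) • !![(μ : ℚ) / (2 * p), 1 / p; (m : ℚ), -(μ : ℚ) / (2 * p)] =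
      latticeMat p (-t) u (t * m) := by
  have htQ : 2 * (p : ℚ) = g * t := by exact_mod_cast ht
  obtain ⟨hg0, ht0⟩ := mul_ne_zero_iff.mp (htQ ▸ by positivity : (g : ℚ) * t ≠ 0)
  rw [htQ, show (μ : ℚ) = g * u by exact_mod_cast hu]
  ext i j
  fin_cases i <;> fin_cases j <;> simp [latticeMat, hg0] <;> field_simp

theorem matrix_eq_latticeMat_zero_one (μ : ℤ) :
    !![(1 : ℚ), 0; -(μ : ℚ), -1] = latticeMat p 0 1 (-μ) := by
  ext i j
  fin_cases i <;> fin_cases j <;> simp [latticeMat]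

theorem matrix_eq_latticeMat_neg_one_zero (m : ℤ) :
    !![(0 : ℚ), 1 / p; -(m : ℚ), 0] = latticeMat p (-1) 0 (-m) := by
  ext i j
  fin_cases i <;> fin_cases j <;> simp [latticeMat]

end Lattice

theorem sublattice_index_general (p : ℕ) (μ m D : ℤ)
    (hD : D = -(μ ^ 2 + 4 * p * m)) (hDpos : 0 < D)
    (g : ℕ) (hg : g = Int.gcd μ (2 * p))
    (x e₁ e₂ : Matrix (Fin 2) (Fin 2) ℚ)
    (hx : x = !![(μ : ℚ) / (2 * p), 1 / p; (m : ℚ), -(μ : ℚ) / (2 * p)])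
    (he₁ : e₁ = !![(1 : ℚ), 0; -(μ : ℚ), -1])
    (he₂ : e₂ = !![(0 : ℚ), 1 / p; -(m : ℚ), 0]) :
    (g : ℤ) ∣ D ∧
    zSpan₃ ((2 * (p : ℚ) / g) • x) e₁ e₂ ≤ latticeL p ∧
    (zSpan₃ ((2 * (p : ℚ) / g) • x) e₁ e₂).relIndex (latticeL p) ≠ 0 ∧
    ((zSpan₃ ((2 * (p : ℚ) / g) • x) e₁ e₂).relIndex (latticeL p) : ℤ) = D / g := by
  have hp : p ≠ 0 := by
    rintro rfl
    push_cast at hD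
    nlinarith [sq_nonneg μ]
  obtain ⟨u, hu⟩ : (g : ℤ) ∣ μ := hg ▸ Int.gcd_dvd_left _ _
  obtain ⟨t, ht⟩ : (g : ℤ) ∣ 2 * p := hg ▸ Int.gcd_dvd_right _ _
  obtain ⟨d, hd⟩ : ∃ d : ℤ, 2 * t * m + μ * u = -d := ⟨_, (neg_neg _).symm⟩
  have hDg : D = g * d := by linear_combination hD - μ * hu - 2 * m * ht - g * hd
  have hg0 : (g : ℤ) ≠ 0 := by
    rintro hg0
    rw [hg0, zero_mul] at ht
    omega
  have hd0 : 0 < d := pos_of_mul_pos_right (hDg ▸ hDpos) (Int.natCast_nonneg g)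
  subst hx he₁ he₂
  rw [two_mul_div_smul_eq_latticeMat hp hu ht, matrix_eq_latticeMat_zero_one,
    matrix_eq_latticeMat_neg_one_zero, relIndex_zSpan₃_latticeL hp hd, hDg, Int.mul_ediv_cancel_left _ hg0]
  exact ⟨dvd_mul_right _ _, zSpan₃_le (latticeMat_mem_latticeL _ _ _)
    (latticeMat_mem_latticeL _ _ _) (latticeMat_mem_latticeL _ _ _), by omega, by omega⟩

/-- With `L` the lattice of trace-zero matrices `[[b, -a/p], [c, -b]]`
(`a, b, c ∈ ℤ`), `D = -(μ² + 4pm) > 0`, `x = [[μ/(2p), 1/p], [m, -μ/(2p)]]`,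
`e₁ = [[1, 0], [-μ, -1]]`, `e₂ = [[0, 1/p], [-m, 0]]` and `g = gcd(μ, 2p)`:
the integer `g` divides `D`, and the subgroup `L₊ + L₋ = ℤ·(2p/g)·x + ℤe₁ + ℤe₂` has finite
index exactly `D/g` in the lattice `L`. -/
theorem sublattice_index (p : ℕ) (hp : p.Prime) (μ m D : ℤ)
    (hD : D = -(μ ^ 2 + 4 * p * m)) (hDpos : 0 < D)
    (g : ℕ) (hg : g = Int.gcd μ (2 * p))
    (x e₁ e₂ : Matrix (Fin 2) (Fin 2) ℚ)
    (hx : x = !![(μ : ℚ) / (2 * p), 1 / p; (m : ℚ), -(μ : ℚ) / (2 * p)])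
    (he₁ : e₁ = !![(1 : ℚ), 0; -(μ : ℚ), -1])
    (he₂ : e₂ = !![(0 : ℚ), 1 / p; -(m : ℚ), 0]) :
    (g : ℤ) ∣ D ∧
    zSpan₃ ((2 * (p : ℚ) / g) • x) e₁ e₂ ≤ latticeL p ∧
    (zSpan₃ ((2 * (p : ℚ) / g) • x) e₁ e₂).relIndex (latticeL p) ≠ 0 ∧
    ((zSpan₃ ((2 * (p : ℚ) / g) • x) e₁ e₂).relIndex (latticeL p) : ℤ) = D / g :=
  sublattice_index_general p μ m D hD hDpos g hg x e₁ e₂ hx he₁ he₂
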